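/- arXiv:1502.04606 — 4 statements merged into one kernel-verified Lean document; each statement's English description precedes it below -/
import Mathlib

section
/- For all real a > 0, t ≥ 0 and b > 0, erf(√(a t)) = (2/(√π · Γ(b))) ∫₀^{π/2} γ(1/2 + b, a t sec²θ) · sin^{2b-1}(θ) dθ. -/
open Real MeasureTheory Set

/-- Lower incomplete gamma function `γ(s,x) = ∫₀ˣ u^(s-1) e^(-u) du`. -/
noncomputable def lowerGamma (s x : ℝ) : ℝ := ∫ u in (0:ℝ)..x, u ^ (s - 1) * Real.exp (-u)

/-- Error function `erf x = (2/√π) ∫₀ˣ e^(-u²) du`. -/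
noncomputable def erf (x : ℝ) : ℝ := (2 / Real.sqrt π) * ∫ u in (0:ℝ)..x, Real.exp (-u ^ 2)

/-- Complementary error function. -/
noncomputable def erfc (x : ℝ) : ℝ := 1 - erf x

/-!
Write `γ(1/2 + b, x sec²θ) = ∫₀ˣ (v sec²θ)^(b - 1/2) e^(-v sec²θ) sec²θ dv` and exchange the order
of integration. For fixed `v`, since `sec²θ = 1 + tan²θ`, the substitution `w = tan θ` turns the
`θ`-integral into `v^(b - 1/2) e^(-v) ∫₀^∞ w^(2b-1) e^(-v w²) dw = Γ(b) v^(-1/2) e^(-v) / 2`.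
The right-hand side is therefore `γ(1/2, x) / √π`, which is `erf √x` after `v = u²`.
The exchange is justified because the integrand is nonnegative and this iterated integral is finite.
-/

lemma lowerGamma_div (s x c : ℝ) :
    lowerGamma s (x / c) = ∫ v in (0:ℝ)..x, (v / c) ^ (s - 1) * exp (-(v / c)) / c := by
  rcases eq_or_ne c 0 with rfl | hc
  · simp [lowerGamma]
  rw [intervalIntegral.integral_div, intervalIntegral.integral_comp_div
    (fun u ↦ u ^ (s - 1) * exp (-u)) hc, zero_div, smul_eq_mul, mul_div_cancel_left₀ _ hc,
    lowerGamma]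

lemma erf_sqrt_eq_lowerGamma {x : ℝ} (hx : 0 ≤ x) : erf (√x) = lowerGamma (1 / 2) x / √π := by
  have hsubst := intervalIntegral.integral_comp_mul_deriv_of_deriv_nonneg
    (f := fun u : ℝ ↦ u ^ 2) (f' := fun u ↦ 2 * u) (g := fun v ↦ v ^ ((1 / 2 : ℝ) - 1) * exp (-v))
    (a := 0) (b := √x) (continuous_pow 2).continuousOn
    (fun u _ ↦ by simpa using hasDerivAt_pow 2 u)
    (fun u hu ↦ by simp only [min_eq_left (sqrt_nonneg x)] at hu; linarith [hu.1])
  rw [zero_pow two_ne_zero, sq_sqrt hx] at hsubst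
  have hcongr : ∫ u in (0:ℝ)..√x,
      ((fun v ↦ v ^ ((1 / 2 : ℝ) - 1) * exp (-v)) ∘ fun u ↦ u ^ 2) u * (2 * u)
      = ∫ u in (0:ℝ)..√x, 2 * exp (-u ^ 2) := by
    refine intervalIntegral.integral_congr_ae (Filter.Eventually.of_forall fun u hu ↦ ?_)
    rw [uIoc_of_le (sqrt_nonneg x)] at hu
    have hpow : (u ^ 2) ^ ((1 / 2 : ℝ) - 1) = u⁻¹ := by
      rw [← rpow_natCast, ← rpow_mul hu.1.le]
      norm_num [rpow_neg_one]
    simp only [Function.comp_apply, hpow]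
    field_simp [hu.1.ne']
  rw [erf, lowerGamma, ← hsubst, hcongr, intervalIntegral.integral_const_mul]
  ring

lemma image_tan_Ioo_zero_pi_div_two : tan '' Ioo 0 (π / 2) = Ioi 0 := by
  ext w
  refine ⟨?_, fun hw ↦ ⟨arctan w, ⟨?_, arctan_lt_pi_div_two w⟩, tan_arctan w⟩⟩
  · rintro ⟨θ, hθ, rfl⟩
    exact tan_pos_of_pos_of_lt_pi_div_two hθ.1 hθ.2
  · simpa using arctan_strictMono (mem_Ioi.mp hw)

lemma hasDerivWithinAt_tan_of_mem_Ioo {θ : ℝ} (hθ : θ ∈ Ioo 0 (π / 2)) :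
    HasDerivWithinAt tan (cos θ ^ 2)⁻¹ (Ioo 0 (π / 2)) θ := by
  have hc : cos θ ≠ 0 := (cos_pos_of_mem_Ioo ⟨by linarith [hθ.1, pi_pos], hθ.2⟩).ne'
  simpa using (hasDerivAt_tan hc).hasDerivWithinAt

lemma injOn_tan_Ioo_zero_pi_div_two : InjOn tan (Ioo 0 (π / 2)) :=
  injOn_tan.mono (Ioo_subset_Ioo (by linarith [pi_pos]) le_rfl)

section TanSubstitution

variable {E : Type*} [NormedAddCommGroup E] [NormedSpace ℝ E]

theorem integral_comp_tan_Ioo (g : ℝ → E) :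
    ∫ θ in Ioo 0 (π / 2), (cos θ ^ 2)⁻¹ • g (tan θ) = ∫ w in Ioi 0, g w := by
  rw [← image_tan_Ioo_zero_pi_div_two, integral_image_eq_integral_abs_deriv_smul measurableSet_Ioo
    (fun θ hθ ↦ hasDerivWithinAt_tan_of_mem_Ioo hθ) injOn_tan_Ioo_zero_pi_div_two]
  simp only [abs_inv, abs_pow, sq_abs]

theorem integrableOn_comp_tan_Ioo (g : ℝ → E) :
    IntegrableOn (fun θ ↦ (cos θ ^ 2)⁻¹ • g (tan θ)) (Ioo 0 (π / 2)) ↔ IntegrableOn g (Ioi 0) := by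
  rw [← image_tan_Ioo_zero_pi_div_two, integrableOn_image_iff_integrableOn_abs_deriv_smul
    measurableSet_Ioo (fun θ hθ ↦ hasDerivWithinAt_tan_of_mem_Ioo hθ)
    injOn_tan_Ioo_zero_pi_div_two]
  simp only [abs_inv, abs_pow, sq_abs]

end TanSubstitution

lemma integral_rpow_mul_exp_neg_mul_sq {b v : ℝ} (hb : 0 < b) (hv : 0 < v) :
    ∫ w in Ioi 0, w ^ (2 * b - 1) * exp (-v * w ^ 2) = Gamma b / 2 * v ^ (-b) := by
  have h := integral_rpow_mul_exp_neg_mul_rpow two_pos (by linarith : -1 < 2 * b - 1) hv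
  simp only [rpow_two] at h
  rw [h, show (2 * b - 1 + 1) / 2 = b by ring, show -(2 * b - 1 + 1) / 2 = -b by ring]
  ring

lemma integrableOn_Ioo_rpow_mul_exp_neg {s : ℝ} (hs : 0 < s) (x : ℝ) :
    IntegrableOn (fun u ↦ u ^ (s - 1) * exp (-u)) (Ioo 0 x) :=
  ((GammaIntegral_convergent hs).congr_fun (fun _ _ ↦ mul_comm _ _) measurableSet_Ioi).mono_set
    Ioo_subset_Ioi_self

noncomputable def erfKernel (b θ v : ℝ) : ℝ :=
  (v / cos θ ^ 2) ^ (1 / 2 + b - 1) * exp (-(v / cos θ ^ 2)) / cos θ ^ 2 * sin θ ^ (2 * b - 1)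

lemma measurable_erfKernel (b : ℝ) : Measurable (Function.uncurry (erfKernel b)) := by
  unfold erfKernel
  fun_prop

lemma erfKernel_nonneg {b θ v : ℝ} (hθ : θ ∈ Ioo 0 (π / 2)) (hv : 0 ≤ v) :
    0 ≤ erfKernel b θ v := by
  have hs : 0 ≤ sin θ := (sin_pos_of_pos_of_lt_pi hθ.1 (by linarith [hθ.2, pi_pos])).le
  unfold erfKernel
  positivity

lemma intervalIntegral_erfKernel_right (b θ x : ℝ) :
    ∫ v in (0:ℝ)..x, erfKernel b θ v
      = lowerGamma (1 / 2 + b) (x / cos θ ^ 2) * sin θ ^ (2 * b - 1) := by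
  rw [lowerGamma_div, ← intervalIntegral.integral_mul_const]
  rfl

section IntegralLeft

variable {b v : ℝ}

lemma erfKernel_eqOn_tan (hv : 0 ≤ v) :
    EqOn (fun θ ↦ erfKernel b θ v) (fun θ ↦ (cos θ ^ 2)⁻¹ •
      (v ^ (1 / 2 + b - 1) * exp (-v) * (tan θ ^ (2 * b - 1) * exp (-v * tan θ ^ 2))))
      (Ioo 0 (π / 2)) := by
  intro θ hθ
  have hc : 0 < cos θ := cos_pos_of_mem_Ioo ⟨by linarith [hθ.1, pi_pos], hθ.2⟩
  have hs : 0 < sin θ := sin_pos_of_pos_of_lt_pi hθ.1 (by linarith [hθ.2, pi_pos])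
  have hsec : v / cos θ ^ 2 = v + v * tan θ ^ 2 := by
    rw [tan_eq_sin_div_cos]
    field_simp
    rw [add_comm, sin_sq_add_cos_sq, mul_one]
  have hpow : (cos θ ^ 2) ^ (1 / 2 + b - 1) = cos θ ^ (2 * b - 1) := by
    rw [← rpow_natCast, ← rpow_mul hc.le]
    ring_nf
  have hcpow : cos θ ^ (2 * b - 1) ≠ 0 := (rpow_pos_of_pos hc _).ne'
  simp only [erfKernel, smul_eq_mul]
  rw [div_rpow hv (by positivity), hpow, hsec, neg_add, exp_add, tan_eq_sin_div_cos,
    div_rpow hs.le hc.le]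
  field_simp

lemma integrableOn_erfKernel_left (hb : 0 < b) (hv : 0 < v) :
    IntegrableOn (fun θ ↦ erfKernel b θ v) (Ioo 0 (π / 2)) := by
  refine IntegrableOn.congr_fun ?_ (erfKernel_eqOn_tan hv.le).symm measurableSet_Ioo
  rw [integrableOn_comp_tan_Ioo
    fun w ↦ v ^ (1 / 2 + b - 1) * exp (-v) * (w ^ (2 * b - 1) * exp (-v * w ^ 2))]
  exact (integrableOn_rpow_mul_exp_neg_mul_sq hv (by linarith)).const_mul _

lemma integral_erfKernel_left (hb : 0 < b) (hv : 0 < v) :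
    ∫ θ in Ioo 0 (π / 2), erfKernel b θ v = Gamma b / 2 * (v ^ ((1 / 2 : ℝ) - 1) * exp (-v)) := by
  rw [setIntegral_congr_fun measurableSet_Ioo (erfKernel_eqOn_tan hv.le),
    integral_comp_tan_Ioo
      fun w ↦ v ^ (1 / 2 + b - 1) * exp (-v) * (w ^ (2 * b - 1) * exp (-v * w ^ 2)),
    integral_const_mul, integral_rpow_mul_exp_neg_mul_sq hb hv]
  have hpow : v ^ (1 / 2 + b - 1) * v ^ (-b) = v ^ ((1 / 2 : ℝ) - 1) := by
    rw [← rpow_add hv]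
    ring_nf
  rw [← hpow]
  ring

end IntegralLeft

lemma integrable_erfKernel {b : ℝ} (hb : 0 < b) (x : ℝ) :
    Integrable (Function.uncurry (erfKernel b))
      ((volume.restrict (Ioo 0 (π / 2))).prod (volume.restrict (Ioo 0 x))) := by
  rw [integrable_prod_iff' (measurable_erfKernel b).aestronglyMeasurable]
  refine ⟨?_, ?_⟩
  · filter_upwards [ae_restrict_mem measurableSet_Ioo] with v hv
    exact integrableOn_erfKernel_left hb hv.1
  · refine ((integrableOn_Ioo_rpow_mul_exp_neg one_half_pos x).const_mul (Gamma b / 2)).congr ?_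
    filter_upwards [ae_restrict_mem measurableSet_Ioo] with v hv
    rw [← integral_erfKernel_left hb hv.1]
    exact setIntegral_congr_fun measurableSet_Ioo
      fun θ hθ ↦ (norm_of_nonneg (erfKernel_nonneg hθ hv.1.le)).symm

theorem erf_sqrt_eq_integral_lowerGamma {b x : ℝ} (hb : 0 < b) (hx : 0 ≤ x) :
    erf (√x) = 2 / (√π * Gamma b) *
      ∫ θ in (0:ℝ)..(π / 2), lowerGamma (1 / 2 + b) (x / cos θ ^ 2) * sin θ ^ (2 * b - 1) := by
  have hint : ∫ θ in (0:ℝ)..(π / 2), lowerGamma (1 / 2 + b) (x / cos θ ^ 2) * sin θ ^ (2 * b - 1)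
      = Gamma b / 2 * lowerGamma (1 / 2) x :=
    calc _ = ∫ θ in Ioo 0 (π / 2), ∫ v in Ioo 0 x, erfKernel b θ v := by
          simp_rw [← intervalIntegral_erfKernel_right, intervalIntegral.integral_of_le hx,
            integral_Ioc_eq_integral_Ioo]
          rw [intervalIntegral.integral_of_le (by positivity), integral_Ioc_eq_integral_Ioo]
      _ = ∫ v in Ioo 0 x, ∫ θ in Ioo 0 (π / 2), erfKernel b θ v :=
          integral_integral_swap (integrable_erfKernel hb x)
      _ = ∫ v in Ioo 0 x, Gamma b / 2 * (v ^ ((1 / 2 : ℝ) - 1) * exp (-v)) :=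
          setIntegral_congr_fun measurableSet_Ioo fun v hv ↦ integral_erfKernel_left hb hv.1
      _ = Gamma b / 2 * lowerGamma (1 / 2) x := by
          rw [integral_const_mul, lowerGamma, intervalIntegral.integral_of_le hx,
            integral_Ioc_eq_integral_Ioo]
  have hΓ : Gamma b ≠ 0 := (Gamma_pos_of_pos hb).ne'
  rw [hint, erf_sqrt_eq_lowerGamma hx]
  field_simp

theorem stmt_7 (a t b : ℝ) (ha : 0 < a) (ht : 0 ≤ t) (hb : 0 < b) :
    erf (Real.sqrt (a * t))
      = (2 / (Real.sqrt π * Real.Gamma b))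
          * ∫ θ in (0:ℝ)..(π / 2),
              lowerGamma (1 / 2 + b) (a * t / Real.cos θ ^ 2) * Real.sin θ ^ (2 * b - 1) :=
  erf_sqrt_eq_integral_lowerGamma hb (mul_nonneg ha.le ht)
end

section
/- For all real r > -1 and a > 0, ∫₀^∞ t^r · erfc(a√t) dt = Γ(r + 3/2) / (a^{2r+2} · √π · (1+r)). -/
/-!
Integrate by parts against `t ^ (r + 1) / (r + 1)`. Since
`d/dt erfc (a √t) = -(a / √π) t^(-1/2) e^(-a² t)`, the integral becomes
`a / ((r + 1) √π) · ∫₀^∞ t^(r + 1/2) e^(-a² t) dt`, a Gamma integral equal to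
`a / ((r + 1) √π) · Γ(r + 3/2) / a^(2r + 3)`.
The tail bound `erfc x ≤ √2 e^(-x²/2)` for `x ≥ 0` gives both the integrability and the
vanishing of the boundary term at infinity.
-/

open Real MeasureTheory Set

open Filter Topology

lemma hasDerivAt_erf (x : ℝ) : HasDerivAt erf (2 / √π * exp (-x ^ 2)) x := by
  have hFTC := (continuous_exp.comp (continuous_pow 2).neg).integral_hasStrictDerivAt 0 x
  exact hFTC.hasDerivAt.const_mul _

lemma continuous_erfc : Continuous erfc :=
  continuous_const.sub <| continuous_iff_continuousAt.2 fun x => (hasDerivAt_erf x).continuousAt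

lemma integrable_exp_neg_sq : Integrable fun u : ℝ => exp (-u ^ 2) := by
  simpa using integrable_exp_neg_mul_sq one_pos

lemma erfc_eq_integral_Ioi (x : ℝ) : erfc x = 2 / √π * ∫ u in Ioi x, exp (-u ^ 2) := by
  have hhalf : ∫ u in Ioi (0 : ℝ), exp (-u ^ 2) = √π / 2 := by
    simpa using integral_gaussian_Ioi 1
  rw [erfc, erf, ← intervalIntegral.integral_Ioi_sub_Ioi' integrable_exp_neg_sq.integrableOn
    integrable_exp_neg_sq.integrableOn, hhalf]
  field_simp
  ring

lemma erfc_nonneg (x : ℝ) : 0 ≤ erfc x := by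
  rw [erfc_eq_integral_Ioi]
  have : 0 ≤ ∫ u in Ioi x, exp (-u ^ 2) :=
    setIntegral_nonneg measurableSet_Ioi fun u _ => (exp_pos _).le
  positivity

lemma erfc_le_sqrt_two_mul_exp {x : ℝ} (hx : 0 ≤ x) : erfc x ≤ √2 * exp (-x ^ 2 / 2) := by
  have hint : Integrable fun u : ℝ => exp (-x ^ 2 / 2) * exp (-(1 / 2) * u ^ 2) :=
    (integrable_exp_neg_mul_sq (by norm_num)).const_mul _
  calc erfc x = 2 / √π * ∫ u in Ioi x, exp (-u ^ 2) := erfc_eq_integral_Ioi x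
    _ ≤ 2 / √π * ∫ u in Ioi x, exp (-x ^ 2 / 2) * exp (-(1 / 2) * u ^ 2) := by
      refine mul_le_mul_of_nonneg_left ?_ (by positivity)
      refine setIntegral_mono_on integrable_exp_neg_sq.integrableOn hint.integrableOn
        measurableSet_Ioi fun u (hu : x < u) => ?_
      rw [← exp_add, exp_le_exp]
      nlinarith
    _ ≤ 2 / √π * ∫ u in Ioi 0, exp (-x ^ 2 / 2) * exp (-(1 / 2) * u ^ 2) := by
      refine mul_le_mul_of_nonneg_left ?_ (by positivity)
      exact setIntegral_mono_set hint.integrableOn (.of_forall fun u => by positivity)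
        (Ioi_subset_Ioi hx).eventuallyLE
    _ = √2 * exp (-x ^ 2 / 2) := by
      rw [integral_const_mul, integral_gaussian_Ioi, div_div_eq_mul_div, div_one,
        sqrt_mul' _ zero_le_two]
      field_simp

lemma erfc_mul_sqrt_le {a t : ℝ} (ha : 0 ≤ a) (ht : 0 ≤ t) :
    erfc (a * √t) ≤ √2 * exp (-(a ^ 2 / 2 * t)) := by
  have := erfc_le_sqrt_two_mul_exp (mul_nonneg ha (sqrt_nonneg t))
  rwa [mul_pow, sq_sqrt ht, neg_div, mul_div_right_comm] at this

lemma hasDerivAt_erfc_mul_sqrt (a : ℝ) {t : ℝ} (ht : 0 < t) :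
    HasDerivAt (fun t : ℝ => erfc (a * √t))
      (-(a / √π) * (t ^ (-(1 / 2) : ℝ) * exp (-(a ^ 2 * t)))) t := by
  have h := ((hasDerivAt_erf (a * √t)).comp t ((hasDerivAt_sqrt ht.ne').const_mul a)).const_sub 1
  refine (show HasDerivAt (fun t => 1 - erf (a * √t)) _ t from h).congr_deriv ?_
  rw [mul_pow, sq_sqrt ht.le, rpow_neg ht.le, ← sqrt_eq_rpow]
  field_simp

lemma hasDerivAt_rpow_add_one_div {r t : ℝ} (hr : r + 1 ≠ 0) (ht : t ≠ 0) :
    HasDerivAt (fun t : ℝ => t ^ (r + 1) / (r + 1)) (t ^ r) t := by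
  refine ((hasDerivAt_rpow_const (Or.inl ht)).div_const (r + 1)).congr_deriv ?_
  rw [add_sub_cancel_right, mul_div_cancel_left₀ _ hr]

lemma integrableOn_rpow_mul_exp_neg_mul {s b : ℝ} (hs : -1 < s) (hb : 0 < b) :
    IntegrableOn (fun t : ℝ => t ^ s * exp (-(b * t))) (Ioi 0) := by
  simpa [rpow_one, neg_mul] using integrableOn_rpow_mul_exp_neg_mul_rpow hs one_pos hb

lemma integrableOn_rpow_mul_erfc_mul_sqrt {r a : ℝ} (hr : -1 < r) (ha : 0 < a) :
    IntegrableOn (fun t : ℝ => t ^ r * erfc (a * √t)) (Ioi 0) := by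
  have hcont : ContinuousOn (fun t : ℝ => t ^ r * erfc (a * √t)) (Ioi 0) :=
    (continuousOn_id.rpow_const fun t ht => Or.inl (ne_of_gt ht)).mul
      (continuous_erfc.comp (continuous_const.mul continuous_sqrt)).continuousOn
  refine ((integrableOn_rpow_mul_exp_neg_mul hr (b := a ^ 2 / 2) (by positivity)).const_mul
    √2).mono' (hcont.aestronglyMeasurable measurableSet_Ioi) ?_
  filter_upwards [ae_restrict_mem measurableSet_Ioi] with t (ht : 0 < t)
  rw [norm_of_nonneg (mul_nonneg (rpow_nonneg ht.le r) (erfc_nonneg _)), mul_left_comm]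
  exact mul_le_mul_of_nonneg_left (erfc_mul_sqrt_le ha.le ht.le) (rpow_nonneg ht.le r)

lemma tendsto_rpow_mul_erfc_mul_sqrt_atTop (s : ℝ) {a : ℝ} (ha : 0 < a) :
    Tendsto (fun t : ℝ => t ^ s * erfc (a * √t)) atTop (𝓝 0) := by
  have hbound := (tendsto_rpow_mul_exp_neg_mul_atTop_nhds_zero s (a ^ 2 / 2)
    (by positivity)).const_mul √2
  rw [mul_zero] at hbound
  refine tendsto_of_tendsto_of_tendsto_of_le_of_le' tendsto_const_nhds hbound ?_ ?_
  · filter_upwards [eventually_ge_atTop 0] with t ht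
    exact mul_nonneg (rpow_nonneg ht s) (erfc_nonneg _)
  · filter_upwards [eventually_ge_atTop 0] with t ht
    rw [mul_left_comm, neg_mul]
    exact mul_le_mul_of_nonneg_left (erfc_mul_sqrt_le ha.le ht) (rpow_nonneg ht s)

lemma integral_rpow_mul_erfc_mul_sqrt {r a : ℝ} (hr : -1 < r) (ha : 0 < a) :
    ∫ t in Ioi 0, t ^ r * erfc (a * √t)
      = a / ((r + 1) * √π) * ∫ t in Ioi 0, t ^ (r + 1 / 2) * exp (-(a ^ 2 * t)) := by
  have hr1 : 0 < r + 1 := by linarith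
  set u' : ℝ → ℝ := fun t => -(a / √π) * (t ^ (-(1 / 2) : ℝ) * exp (-(a ^ 2 * t)))
  set v : ℝ → ℝ := fun t => t ^ (r + 1) / (r + 1)
  have hv : ∀ t ∈ Ioi (0 : ℝ), HasDerivAt v (t ^ r) t := fun t ht =>
    hasDerivAt_rpow_add_one_div hr1.ne' (ne_of_gt ht)
  have hu'v : ∀ t ∈ Ioi (0 : ℝ),
      u' t * v t = -(a / ((r + 1) * √π)) * (t ^ (r + 1 / 2) * exp (-(a ^ 2 * t))) := by
    intro t (ht : 0 < t)
    have hpow : t ^ (-(1 / 2) : ℝ) * t ^ (r + 1) = t ^ (r + 1 / 2) := by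
      rw [← rpow_add ht]; ring_nf
    rw [← hpow]
    simp only [u', v]
    rw [mul_comm (r + 1), ← div_div]
    ring
  have h_zero : Tendsto ((fun t => erfc (a * √t)) * v) (𝓝[>] 0) (𝓝 0) := by
    have hcont : ContinuousAt ((fun t => erfc (a * √t)) * v) 0 :=
      ((continuous_erfc.comp (continuous_const.mul continuous_sqrt)).continuousAt).mul
        ((continuousAt_rpow_const 0 (r + 1) (Or.inr hr1.le)).div_const _)
    simpa [v, zero_rpow hr1.ne'] using hcont.tendsto.mono_left nhdsWithin_le_nhds
  have h_infty : Tendsto ((fun t => erfc (a * √t)) * v) atTop (𝓝 0) := by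
    have h := (tendsto_rpow_mul_erfc_mul_sqrt_atTop (r + 1) ha).div_const (r + 1)
    rw [zero_div] at h
    refine h.congr fun t => ?_
    simp only [Pi.mul_apply, v]
    ring
  have hIBP := integral_Ioi_mul_deriv_eq_deriv_mul (fun t ht => hasDerivAt_erfc_mul_sqrt a ht) hv
    ((integrableOn_rpow_mul_erfc_mul_sqrt hr ha).congr_fun (fun t _ => mul_comm _ _)
      measurableSet_Ioi)
    (IntegrableOn.congr_fun ((integrableOn_rpow_mul_exp_neg_mul (by linarith)
      (pow_pos ha 2)).const_mul _) (fun t ht => (hu'v t ht).symm) measurableSet_Ioi)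
    h_zero h_infty
  rw [setIntegral_congr_fun measurableSet_Ioi hu'v, integral_const_mul] at hIBP
  simp only [mul_comm (_ ^ r)]
  rw [hIBP]
  ring

theorem stmt_12 (r a : ℝ) (hr : -1 < r) (ha : 0 < a) :
    ∫ t in Ioi (0:ℝ), t ^ r * erfc (a * Real.sqrt t)
      = Real.Gamma (r + 3 / 2) / (a ^ (2 * r + 2) * Real.sqrt π * (1 + r)) := by
  have hGamma := integral_rpow_mul_exp_neg_mul_Ioi (a := r + 3 / 2) (by linarith) (pow_pos ha 2)
  have hpow : (1 / a ^ 2) ^ (r + 3 / 2) = (a ^ (2 * r + 2) * a)⁻¹ := by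
    rw [one_div, inv_rpow (by positivity), ← rpow_natCast, ← rpow_mul ha.le,
      ← rpow_add_one ha.ne']
    norm_num
    ring_nf
  rw [integral_rpow_mul_erfc_mul_sqrt hr ha, ← show r + 3 / 2 - 1 = r + 1 / 2 by ring, hGamma,
    hpow, add_comm 1 r]
  field_simp
end

section
/- For all real a > 0 and b ≥ 0, ∫_a^∞ e^{-b² t²} / (t √(t² − a²)) dt = (π/(2a)) · erfc(a b). -/
/-!
Let `F x = ∫_a^∞ e^{-x²t²} / (t √(t² - a²)) dt`. At `x = 0` the integrand has the primitive
`arccos (a / t) / a`, so `F 0 = π / (2a)`. For `x > 0` one may differentiate under the integral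
sign, and the substitution `σ = √(t² - a²)` turns `∫_a^∞ t e^{-ct²} / √(t² - a²) dt` into a
Gaussian integral, giving `F' x = -√π e^{-a²x²}`. This is also the derivative of
`π / (2a) · erfc (a x)`, so the two sides, continuous on `[0, ∞)` and equal at `0`, coincide.
-/

open Real MeasureTheory Set

open Filter Topology

lemma hasDerivAt_sqrt_sq_sub_sq {a t : ℝ} (h : t ^ 2 - a ^ 2 ≠ 0) :
    HasDerivAt (fun t : ℝ => √(t ^ 2 - a ^ 2)) (t / √(t ^ 2 - a ^ 2)) t := by
  have hsq : HasDerivAt (fun t : ℝ => t ^ 2 - a ^ 2) (2 * t) t := by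
    simpa using (hasDerivAt_pow 2 t).sub_const (a ^ 2)
  convert hsq.sqrt h using 1
  rw [mul_div_mul_left _ _ two_ne_zero]

lemma tendsto_sqrt_sq_sub_sq_atTop (a : ℝ) :
    Tendsto (fun t : ℝ => √(t ^ 2 - a ^ 2)) atTop atTop :=
  tendsto_sqrt_atTop.comp <| tendsto_atTop_add_const_right _ _ <| tendsto_pow_atTop two_ne_zero

section GaussianWeight

variable {a c : ℝ}

lemma continuous_exp_mul_integral_exp_sqrt (a c : ℝ) :
    Continuous fun t => exp (-(c * a ^ 2)) * ∫ σ in (0:ℝ)..√(t ^ 2 - a ^ 2), exp (-(c * σ ^ 2)) :=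
  continuous_const.mul <| (intervalIntegral.continuous_primitive
    (fun _ _ => (by fun_prop : Continuous fun σ : ℝ => exp (-(c * σ ^ 2))).intervalIntegrable _ _)
    0).comp (by fun_prop)

lemma hasDerivAt_exp_mul_integral_exp_sqrt (c : ℝ) {t : ℝ} (ht : a ^ 2 < t ^ 2) :
    HasDerivAt
      (fun t => exp (-(c * a ^ 2)) * ∫ σ in (0:ℝ)..√(t ^ 2 - a ^ 2), exp (-(c * σ ^ 2)))
      (t * exp (-(c * t ^ 2)) / √(t ^ 2 - a ^ 2)) t := by
  have hprim := ((by fun_prop : Continuous fun σ : ℝ => exp (-(c * σ ^ 2))).integral_hasStrictDerivAt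
    0 (√(t ^ 2 - a ^ 2))).hasDerivAt
  refine ((hprim.comp t (hasDerivAt_sqrt_sq_sub_sq (sub_ne_zero.2 ht.ne'))).const_mul
    (exp (-(c * a ^ 2)))).congr_deriv ?_
  rw [sq_sqrt (sub_nonneg.2 ht.le), ← mul_assoc, ← exp_add]
  ring_nf

lemma tendsto_exp_mul_integral_exp_sqrt (a : ℝ) (hc : 0 < c) :
    Tendsto (fun t => exp (-(c * a ^ 2)) * ∫ σ in (0:ℝ)..√(t ^ 2 - a ^ 2), exp (-(c * σ ^ 2)))
      atTop (𝓝 (exp (-(c * a ^ 2)) * (√(π / c) / 2))) := by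
  have hgauss :
      Tendsto (fun y => ∫ σ in (0:ℝ)..y, exp (-(c * σ ^ 2))) atTop (𝓝 (√(π / c) / 2)) := by
    rw [← integral_gaussian_Ioi c]
    simpa only [neg_mul, id] using intervalIntegral_tendsto_integral_Ioi 0
      (integrable_exp_neg_mul_sq hc).integrableOn tendsto_id
  exact (hgauss.comp (tendsto_sqrt_sq_sub_sq_atTop a)).const_mul _

lemma mul_exp_div_sqrt_sq_sub_sq_nonneg (ha : 0 ≤ a) (c : ℝ) {t : ℝ} (ht : a < t) :
    0 ≤ t * exp (-(c * t ^ 2)) / √(t ^ 2 - a ^ 2) := by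
  have : 0 < t := ha.trans_lt ht
  positivity

lemma integrableOn_mul_exp_div_sqrt_sq_sub_sq (ha : 0 ≤ a) (hc : 0 < c) :
    IntegrableOn (fun t => t * exp (-(c * t ^ 2)) / √(t ^ 2 - a ^ 2)) (Ioi a) :=
  integrableOn_Ioi_deriv_of_nonneg (continuous_exp_mul_integral_exp_sqrt a c).continuousWithinAt
    (fun _ ht => hasDerivAt_exp_mul_integral_exp_sqrt c (pow_lt_pow_left₀ ht ha two_ne_zero))
    (fun _ ht => mul_exp_div_sqrt_sq_sub_sq_nonneg ha c ht) (tendsto_exp_mul_integral_exp_sqrt a hc)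

lemma integral_mul_exp_div_sqrt_sq_sub_sq (ha : 0 ≤ a) (hc : 0 < c) :
    ∫ t in Ioi a, t * exp (-(c * t ^ 2)) / √(t ^ 2 - a ^ 2) =
      exp (-(c * a ^ 2)) * (√(π / c) / 2) := by
  rw [integral_Ioi_of_hasDerivAt_of_nonneg
    (continuous_exp_mul_integral_exp_sqrt a c).continuousWithinAt
    (fun _ ht => hasDerivAt_exp_mul_integral_exp_sqrt c (pow_lt_pow_left₀ ht ha two_ne_zero))
    (fun _ ht => mul_exp_div_sqrt_sq_sub_sq_nonneg ha c ht) (tendsto_exp_mul_integral_exp_sqrt a hc)]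
  simp

end GaussianWeight

section ArcsecWeight

variable {a : ℝ}

lemma hasDerivAt_arccos_div_div (ha : 0 < a) {t : ℝ} (ht : a < t) :
    HasDerivAt (fun t => arccos (a / t) / a) (t * √(t ^ 2 - a ^ 2))⁻¹ t := by
  have ht0 : 0 < t := ha.trans ht
  have hquot : HasDerivAt (fun t => a / t) (-a / t ^ 2) t := by
    simpa [div_eq_mul_inv, neg_div] using (hasDerivAt_inv ht0.ne').const_mul a
  have hsqrt : √(1 - (a / t) ^ 2) = √(t ^ 2 - a ^ 2) / t := by
    rw [show 1 - (a / t) ^ 2 = (t ^ 2 - a ^ 2) / t ^ 2 by field_simp,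
      sqrt_div' _ (sq_nonneg t), sqrt_sq ht0.le]
  have hpos : 0 < √(t ^ 2 - a ^ 2) := sqrt_pos.2 (by nlinarith)
  refine (((hasDerivAt_arccos (by linarith [div_pos ha ht0]) ((div_lt_one ht0).2 ht).ne).comp t
    hquot).div_const a).congr_deriv ?_
  rw [hsqrt]
  field_simp

lemma tendsto_arccos_div_div (a : ℝ) :
    Tendsto (fun t => arccos (a / t) / a) atTop (𝓝 (π / (2 * a))) := by
  have hlim :=
    (continuous_arccos.tendsto 0).comp ((tendsto_const_nhds (x := a)).div_atTop tendsto_id)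
  rw [arccos_zero] at hlim
  simpa only [div_div, mul_comm a, Function.comp_def, id] using hlim.div_const a

lemma inv_mul_sqrt_sq_sub_sq_nonneg (ha : 0 ≤ a) {t : ℝ} (ht : a < t) :
    0 ≤ (t * √(t ^ 2 - a ^ 2))⁻¹ := by
  have : 0 < t := ha.trans_lt ht
  positivity

lemma continuousWithinAt_arccos_div_div (ha : 0 < a) :
    ContinuousWithinAt (fun t => arccos (a / t) / a) (Ici a) a :=
  ((continuous_arccos.continuousAt.comp (continuousAt_const.div continuousAt_id ha.ne')).div_const
    a).continuousWithinAt

lemma integrableOn_inv_mul_sqrt_sq_sub_sq (ha : 0 < a) :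
    IntegrableOn (fun t => (t * √(t ^ 2 - a ^ 2))⁻¹) (Ioi a) :=
  integrableOn_Ioi_deriv_of_nonneg (continuousWithinAt_arccos_div_div ha)
    (fun _ ht => hasDerivAt_arccos_div_div ha ht)
    (fun _ ht => inv_mul_sqrt_sq_sub_sq_nonneg ha.le ht) (tendsto_arccos_div_div a)

lemma integral_inv_mul_sqrt_sq_sub_sq (ha : 0 < a) :
    ∫ t in Ioi a, (t * √(t ^ 2 - a ^ 2))⁻¹ = π / (2 * a) := by
  rw [integral_Ioi_of_hasDerivAt_of_nonneg (continuousWithinAt_arccos_div_div ha)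
    (fun _ ht => hasDerivAt_arccos_div_div ha ht)
    (fun _ ht => inv_mul_sqrt_sq_sub_sq_nonneg ha.le ht) (tendsto_arccos_div_div a)]
  simp [div_self ha.ne']

end ArcsecWeight

section ParametricIntegral

variable {a : ℝ}

lemma norm_exp_div_mul_sqrt_sq_sub_sq_le (ha : 0 ≤ a) (x : ℝ) {t : ℝ} (ht : a < t) :
    ‖exp (-(x ^ 2 * t ^ 2)) / (t * √(t ^ 2 - a ^ 2))‖ ≤ (t * √(t ^ 2 - a ^ 2))⁻¹ := by
  have : 0 < t := ha.trans_lt ht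
  rw [norm_of_nonneg (by positivity), div_eq_mul_inv]
  exact mul_le_of_le_one_left (by positivity) (exp_le_one_iff.2 (by nlinarith))

lemma integrableOn_exp_div_mul_sqrt_sq_sub_sq (ha : 0 < a) (x : ℝ) :
    IntegrableOn (fun t => exp (-(x ^ 2 * t ^ 2)) / (t * √(t ^ 2 - a ^ 2))) (Ioi a) :=
  (integrableOn_inv_mul_sqrt_sq_sub_sq ha).mono' (by fun_prop : Measurable _).aestronglyMeasurable
    (ae_restrict_of_forall_mem measurableSet_Ioi fun _ ht =>
      norm_exp_div_mul_sqrt_sq_sub_sq_le ha.le x ht)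

lemma continuous_integral_exp_div_mul_sqrt_sq_sub_sq (ha : 0 < a) :
    Continuous fun x => ∫ t in Ioi a, exp (-(x ^ 2 * t ^ 2)) / (t * √(t ^ 2 - a ^ 2)) :=
  continuous_of_dominated (fun x => (integrableOn_exp_div_mul_sqrt_sq_sub_sq ha x).1)
    (fun x => ae_restrict_of_forall_mem measurableSet_Ioi fun _ ht =>
      norm_exp_div_mul_sqrt_sq_sub_sq_le ha.le x ht)
    (integrableOn_inv_mul_sqrt_sq_sub_sq ha) (ae_of_all _ fun _ => by fun_prop)

lemma hasDerivAt_integral_exp_div_mul_sqrt_sq_sub_sq (ha : 0 < a) {x : ℝ} (hx : 0 < x) :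
    HasDerivAt (fun x => ∫ t in Ioi a, exp (-(x ^ 2 * t ^ 2)) / (t * √(t ^ 2 - a ^ 2)))
      (-(√π * exp (-(a ^ 2 * x ^ 2)))) x := by
  set F' : ℝ → ℝ → ℝ := fun y t => -(2 * y) * (t * exp (-(y ^ 2 * t ^ 2)) / √(t ^ 2 - a ^ 2))
  have hbound : ∀ t ∈ Ioi a, ∀ y ∈ Metric.ball x (x / 2),
      ‖F' y t‖ ≤ 3 * x * (t * exp (-((x / 2) ^ 2 * t ^ 2)) / √(t ^ 2 - a ^ 2)) := by
    intro t ht y hy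
    have ht0 : 0 < t := ha.trans ht
    rw [Metric.mem_ball, dist_eq, abs_lt] at hy
    have hy0 : 0 < y := by linarith
    rw [norm_mul, norm_neg, norm_of_nonneg (by positivity),
      norm_of_nonneg (mul_exp_div_sqrt_sq_sub_sq_nonneg ha.le _ ht)]
    refine mul_le_mul (by linarith) ?_ (by positivity) (by positivity)
    gcongr
    linarith
  have hderiv : ∀ t ∈ Ioi a, ∀ y ∈ Metric.ball x (x / 2),
      HasDerivAt (fun y => exp (-(y ^ 2 * t ^ 2)) / (t * √(t ^ 2 - a ^ 2))) (F' y t) y := by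
    intro t ht y _
    have ht0 : 0 < t := ha.trans ht
    refine ((((hasDerivAt_pow 2 y).mul_const (t ^ 2)).neg.exp).div_const _).congr_deriv ?_
    norm_num [F']
    field_simp
  obtain ⟨-, hF⟩ := hasDerivAt_integral_of_dominated_loc_of_deriv_le
    (Metric.ball_mem_nhds x (half_pos hx))
    (Eventually.of_forall fun y => (integrableOn_exp_div_mul_sqrt_sq_sub_sq ha y).1)
    (integrableOn_exp_div_mul_sqrt_sq_sub_sq ha x)
    ((integrableOn_mul_exp_div_sqrt_sq_sub_sq ha.le (pow_pos hx 2)).const_mul _).1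
    (ae_restrict_of_forall_mem measurableSet_Ioi hbound)
    ((integrableOn_mul_exp_div_sqrt_sq_sub_sq ha.le (pow_pos (half_pos hx) 2)).const_mul _)
    (ae_restrict_of_forall_mem measurableSet_Ioi hderiv)
  refine hF.congr_deriv ?_
  simp only [F']
  rw [integral_const_mul, integral_mul_exp_div_sqrt_sq_sub_sq ha.le (pow_pos hx 2),
    sqrt_div' _ (sq_nonneg x), sqrt_sq hx.le]
  field_simp

end ParametricIntegral

lemma erfc_zero : erfc 0 = 1 := by
  simp [erfc, erf]

lemma hasDerivAt_const_mul_erfc_mul {a : ℝ} (ha : 0 < a) (x : ℝ) :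
    HasDerivAt (fun x => π / (2 * a) * erfc (a * x)) (-(√π * exp (-(a ^ 2 * x ^ 2)))) x := by
  refine ((((hasDerivAt_erf (a * x)).comp x ((hasDerivAt_id x).const_mul a)).const_sub
    1).const_mul (π / (2 * a))).congr_deriv ?_
  have hπ : √π ^ 2 = π := sq_sqrt pi_pos.le
  rw [mul_pow]
  field_simp
  linear_combination hπ

theorem stmt_17 (a b : ℝ) (ha : 0 < a) (hb : 0 ≤ b) :
    ∫ t in Ioi a, Real.exp (-(b ^ 2 * t ^ 2)) / (t * Real.sqrt (t ^ 2 - a ^ 2))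
      = (π / (2 * a)) * erfc (a * b) := by
  set F := fun x => ∫ t in Ioi a, exp (-(x ^ 2 * t ^ 2)) / (t * √(t ^ 2 - a ^ 2))
  set G := fun x => π / (2 * a) * erfc (a * x)
  change F b = G b
  have hzero : F 0 = G 0 := by
    simpa [F, G, erfc_zero] using integral_inv_mul_sqrt_sq_sub_sq ha
  rcases hb.eq_or_lt with rfl | hb
  · exact hzero
  obtain ⟨c, -, hslope⟩ := exists_hasDerivAt_eq_slope (fun x => F x - G x) (fun _ => 0) hb
    ((continuous_integral_exp_div_mul_sqrt_sq_sub_sq ha).sub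
      (continuous_iff_continuousAt.2 fun x =>
        (hasDerivAt_const_mul_erfc_mul ha x).continuousAt)).continuousOn
    (fun x hx => ((hasDerivAt_integral_exp_div_mul_sqrt_sq_sub_sq ha hx.1).sub
        (hasDerivAt_const_mul_erfc_mul ha x)).congr_deriv (sub_self _))
  have hconst := (div_eq_zero_iff.1 hslope.symm).resolve_right (sub_ne_zero.2 hb.ne')
  linarith
end

section
/- For all real a > 0 and b ≥ 0, ∫₀^∞ e^{-b² t²} / (t² + a²) dt = (π/(2a)) · e^{a² b²} · erfc(a b). -/
open Real MeasureTheory Set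

/-!
Expand `1 / (t² + a²) = ∫₀^∞ e^{-(t² + a²) s} ds` and swap the two integrals. The inner integral
over `t` is then the Gaussian half-line integral `e^{-a² s} · ½ √(π / (b² + s))`, and the
substitution `s = u² - b²` turns what is left into `√π e^{a² b²} ∫_b^∞ e^{-a² u²} du`, a
rescaled Gaussian tail, i.e. `√π / (2a) · erfc (a b)`.
-/

theorem integral_exp_neg_mul_Ioi_zero {c : ℝ} (hc : 0 < c) :
    ∫ s in Ioi (0:ℝ), Real.exp (-(c * s)) = c⁻¹ := by
  simpa [neg_mul, neg_div, one_div] using integral_exp_mul_Ioi (neg_lt_zero.2 hc) 0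

theorem integrable_inv_sq_add {c : ℝ} (hc : 0 < c) :
    Integrable fun t : ℝ => (t ^ 2 + c)⁻¹ := by
  have hc' : √c ≠ 0 := (Real.sqrt_pos.2 hc).ne'
  refine ((integrable_inv_one_add_sq.comp_div hc').const_mul c⁻¹).congr (ae_of_all _ fun t => ?_)
  simp only [div_pow, Real.sq_sqrt hc.le]
  field_simp
  ring

theorem integrable_exp_neg_mul_sq_mul_exp_neg_mul_prod {β c : ℝ} (hβ : 0 ≤ β) (hc : 0 < c) :
    Integrable (fun p : ℝ × ℝ => Real.exp (-(β * p.1 ^ 2)) * Real.exp (-((p.1 ^ 2 + c) * p.2)))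
      ((volume.restrict (Ioi 0)).prod (volume.restrict (Ioi 0))) := by
  have hpos : ∀ t : ℝ, 0 < t ^ 2 + c := fun t => by positivity
  rw [integrable_prod_iff (by fun_prop)]
  refine ⟨ae_of_all _ fun t => ?_, ?_⟩
  · simpa only [neg_mul] using (exp_neg_integrableOn_Ioi 0 (hpos t)).const_mul _
  · have hnorm : (fun t : ℝ => ∫ s in Ioi (0:ℝ),
          ‖Real.exp (-(β * t ^ 2)) * Real.exp (-((t ^ 2 + c) * s))‖)
        = fun t => Real.exp (-(β * t ^ 2)) * (t ^ 2 + c)⁻¹ := by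
      funext t
      simp only [norm_mul, Real.norm_eq_abs, Real.abs_exp]
      rw [integral_const_mul, integral_exp_neg_mul_Ioi_zero (hpos t)]
    rw [hnorm]
    refine ((integrable_inv_sq_add hc).mono' (by fun_prop) (ae_of_all _ fun t => ?_)).integrableOn
    rw [Real.norm_of_nonneg (by positivity)]
    exact mul_le_of_le_one_left (by positivity) (Real.exp_le_one_iff.2 (by nlinarith [sq_nonneg t]))

theorem integral_exp_neg_mul_sq_div_sq_add {β c : ℝ} (hβ : 0 ≤ β) (hc : 0 < c) :
    ∫ t in Ioi (0:ℝ), Real.exp (-(β * t ^ 2)) / (t ^ 2 + c)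
      = ∫ s in Ioi (0:ℝ), Real.exp (-(c * s)) * (√(π / (β + s)) / 2) := by
  have hschwinger : ∀ t : ℝ, Real.exp (-(β * t ^ 2)) / (t ^ 2 + c)
      = ∫ s in Ioi (0:ℝ), Real.exp (-(β * t ^ 2)) * Real.exp (-((t ^ 2 + c) * s)) := by
    intro t
    rw [integral_const_mul, integral_exp_neg_mul_Ioi_zero (by positivity), div_eq_mul_inv]
  have hgauss : ∀ s : ℝ, ∫ t in Ioi (0:ℝ), Real.exp (-(β * t ^ 2)) * Real.exp (-((t ^ 2 + c) * s))
      = Real.exp (-(c * s)) * (√(π / (β + s)) / 2) := by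
    intro s
    have hexp : ∀ t : ℝ, Real.exp (-(β * t ^ 2)) * Real.exp (-((t ^ 2 + c) * s))
        = Real.exp (-(c * s)) * Real.exp (-(β + s) * t ^ 2) := fun t => by
      rw [← Real.exp_add, ← Real.exp_add]; ring_nf
    simp_rw [hexp]
    rw [integral_const_mul, integral_gaussian_Ioi]
  simp_rw [hschwinger]
  rw [integral_integral_swap (integrable_exp_neg_mul_sq_mul_exp_neg_mul_prod hβ hc)]
  simp_rw [hgauss]

theorem image_sq_sub_sq_Ioi {b : ℝ} (hb : 0 ≤ b) :
    (fun u : ℝ => u ^ 2 - b ^ 2) '' Ioi b = Ioi 0 := by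
  ext y
  refine ⟨?_, fun (hy : 0 < y) => ⟨√(y + b ^ 2), ?_, ?_⟩⟩
  · rintro ⟨u, hu, rfl⟩
    exact sub_pos.2 (pow_lt_pow_left₀ hu hb two_ne_zero)
  · exact (Real.lt_sqrt hb).2 (by linarith)
  · simp only [Real.sq_sqrt (by positivity : 0 ≤ y + b ^ 2), add_sub_cancel_right]

theorem integral_Ioi_zero_eq_integral_comp_sq_sub_sq {E : Type*} [NormedAddCommGroup E]
    [NormedSpace ℝ E] {b : ℝ} (hb : 0 ≤ b) (g : ℝ → E) :
    ∫ s in Ioi (0:ℝ), g s = ∫ u in Ioi b, (2 * u) • g (u ^ 2 - b ^ 2) := by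
  have hderiv : ∀ u ∈ Ioi b, HasDerivWithinAt (fun u : ℝ => u ^ 2 - b ^ 2) (2 * u) (Ioi b) u :=
    fun u _ => by simpa using ((hasDerivAt_pow 2 u).sub_const (b ^ 2)).hasDerivWithinAt
  have hinj : InjOn (fun u : ℝ => u ^ 2 - b ^ 2) (Ioi b) := fun x hx y hy h => by
    simp only [mem_Ioi] at hx hy
    nlinarith
  rw [← image_sq_sub_sq_Ioi hb,
    integral_image_eq_integral_abs_deriv_smul measurableSet_Ioi hderiv hinj]
  refine setIntegral_congr_fun measurableSet_Ioi fun u (hu : b < u) => ?_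
  rw [abs_of_pos (by linarith)]

theorem integral_exp_neg_mul_mul_sqrt_pi_div_add_sq {b : ℝ} (hb : 0 ≤ b) (c : ℝ) :
    ∫ s in Ioi (0:ℝ), Real.exp (-(c * s)) * (√(π / (b ^ 2 + s)) / 2)
      = √π * Real.exp (c * b ^ 2) * ∫ u in Ioi b, Real.exp (-(c * u ^ 2)) := by
  rw [integral_Ioi_zero_eq_integral_comp_sq_sub_sq hb, ← integral_const_mul]
  refine setIntegral_congr_fun measurableSet_Ioi fun u hu => ?_
  have hu : 0 < u := hb.trans_lt hu
  rw [smul_eq_mul, add_sub_cancel, Real.sqrt_div' _ (sq_nonneg u), Real.sqrt_sq hu.le,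
    show -(c * (u ^ 2 - b ^ 2)) = c * b ^ 2 + -(c * u ^ 2) by ring, Real.exp_add]
  field_simp

theorem integral_Ioi_exp_neg_sq (x : ℝ) :
    ∫ v in Ioi x, Real.exp (-v ^ 2) = √π / 2 * erfc x := by
  have hintegrable : Integrable fun v : ℝ => Real.exp (-v ^ 2) := by
    simpa using integrable_exp_neg_mul_sq one_pos
  have hhalf : ∫ v in Ioi (0:ℝ), Real.exp (-v ^ 2) = √π / 2 := by
    simpa using integral_gaussian_Ioi 1
  rw [erfc, erf, ← intervalIntegral.integral_Ioi_sub_Ioi' hintegrable.integrableOn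
    hintegrable.integrableOn, hhalf]
  field_simp
  ring

theorem integral_Ioi_exp_neg_mul_sq {a : ℝ} (ha : 0 < a) (b : ℝ) :
    ∫ u in Ioi b, Real.exp (-(a ^ 2 * u ^ 2)) = √π / (2 * a) * erfc (a * b) := by
  have h := integral_comp_mul_left_Ioi (fun v => Real.exp (-v ^ 2)) b ha
  simp only [mul_pow, smul_eq_mul, integral_Ioi_exp_neg_sq] at h
  rw [h]
  field_simp

theorem stmt_18 (a b : ℝ) (ha : 0 < a) (hb : 0 ≤ b) :
    ∫ t in Ioi (0:ℝ), Real.exp (-(b ^ 2 * t ^ 2)) / (t ^ 2 + a ^ 2)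
      = (π / (2 * a)) * Real.exp (a ^ 2 * b ^ 2) * erfc (a * b) := by
  rw [integral_exp_neg_mul_sq_div_sq_add (sq_nonneg b) (by positivity),
    integral_exp_neg_mul_mul_sqrt_pi_div_add_sq hb, integral_Ioi_exp_neg_mul_sq ha]
  linear_combination Real.exp (a ^ 2 * b ^ 2) * erfc (a * b) / (2 * a)
    * Real.mul_self_sqrt pi_pos.le
end
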